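/- Let B and C be finite types with |B| ≥ 2 and |C| ≥ 2. Then for every even permutation φ of C and every clopen subset F ⊆ (ℤ → B), the map ctrl(φ, F) is the underlying map of an element of PAut[B;C]. -/

import Mathlib

/-! The map `φ ↦ ctrl(φ, F)` is a homomorphism into the permutations of `(B × C)^ℤ`; it is
multiplicative over disjoint unions in `F`, and the commutator of `ctrl(φ, F)` and `ctrl(ψ, G)` is
`ctrl(⁅φ, ψ⁆, F ∩ G)`. When `F` only looks at the coordinate `k`, `ctrl(φ, F)` is a symbol
permutation conjugated by `σ₁^k`, so it lies in `PAut[B;C]` for every `φ`. A 3-cycle `c` is a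
commutator `⁅c⁻¹, β⁆`, and 3-cycles generate the alternating group, so intersecting with one
coordinate condition at a time gives `ctrl(φ, F) ∈ PAut[B;C]` for even `φ` and every cylinder `F`.
By compactness a clopen `F` depends on finitely many coordinates, hence is a finite disjoint union
of cylinders. -/

open Function

/-- The shift map on `ℤ → A`. -/
def shiftMap (A : Type*) : (ℤ → A) → (ℤ → A) := fun x i => x (i + 1)

/-- The shift map as a permutation of `ℤ → A`. -/
def shiftPerm (A : Type*) : Equiv.Perm (ℤ → A) where
  toFun := shiftMap A
  invFun x i := x (i - 1)
  left_inv x := funext fun i => by simp [shiftMap]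
  right_inv x := funext fun i => by simp [shiftMap]

/-- Finite types carry the discrete topology. -/
instance fintypeDiscreteTopology (A : Type*) [Fintype A] : TopologicalSpace A := ⊥

/-- The automorphism group of the full shift `A^ℤ`: shift-commuting self-homeomorphisms of
`ℤ → A`, as a subgroup of the permutation group of `ℤ → A`. -/
def FullShiftAut (A : Type*) [Fintype A] : Subgroup (Equiv.Perm (ℤ → A)) where
  carrier := { f | Continuous ⇑f ∧ Continuous ⇑f.symm ∧
      ∀ x, f (shiftMap A x) = shiftMap A (f x) }
  one_mem' := ⟨continuous_id, continuous_id, fun _ => rfl⟩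
  mul_mem' := by
    rintro f g ⟨hf1, hf2, hf3⟩ ⟨hg1, hg2, hg3⟩
    refine ⟨?_, ?_, fun x => ?_⟩
    · exact hf1.comp hg1
    · exact hg2.comp hf2
    · show f (g (shiftMap A x)) = shiftMap A (f (g x))
      rw [hg3, hf3]
  inv_mem' := by
    rintro f ⟨hf1, hf2, hf3⟩
    refine ⟨hf2, hf1, fun x => ?_⟩
    apply f.injective
    have h : ∀ y, f (f⁻¹ y) = y := fun y => f.apply_symm_apply y
    rw [h, hf3, h]

/-- The symbol permutation determined by a permutation of the alphabet. -/
def symbolPerm {A : Type*} (π : Equiv.Perm A) : Equiv.Perm (ℤ → A) :=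
  Equiv.piCongrRight fun _ => π

/-- The partial shift on the first track. -/
def partialShift₁ (B C : Type*) : Equiv.Perm (ℤ → B × C) where
  toFun x i := ((x (i + 1)).1, (x i).2)
  invFun x i := ((x (i - 1)).1, (x i).2)
  left_inv x := funext fun i => by simp
  right_inv x := funext fun i => by simp

/-- The partial shift on the second track. -/
def partialShift₂ (B C : Type*) : Equiv.Perm (ℤ → B × C) where
  toFun x i := ((x i).1, (x (i + 1)).2)
  invFun x i := ((x i).1, (x (i - 1)).2)
  left_inv x := funext fun i => by simp
  right_inv x := funext fun i => by simp

/-- `PAut[B;C]`: the subgroup of the automorphism group of `(B × C)^ℤ` generated by the two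
partial shifts and all symbol permutations. -/
def PAut (B C : Type*) : Subgroup (Equiv.Perm (ℤ → B × C)) :=
  Subgroup.closure
    ({partialShift₁ B C, partialShift₂ B C} ∪ Set.range (symbolPerm (A := B × C)))

attribute [local instance] Classical.propDecidable

/-- The controlled symbol permutation `ctrl(φ, F)`: apply `φ` on the second track at position
`j` exactly when the first track, shifted so that position `j` becomes the origin, lies in
`F`. -/
noncomputable def ctrlSymb {B C : Type*} (φ : Equiv.Perm C) (F : Set (ℤ → B)) :
    (ℤ → B × C) → (ℤ → B × C) := fun z j =>
  if (fun t => (z (t + j)).1) ∈ F then ((z j).1, φ (z j).2) else z j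

open Equiv Equiv.Perm
open scoped commutatorElement

theorem IsClopen.exists_finset_eq_restrict_preimage {ι : Type*} {A : ι → Type*}
    [∀ i, TopologicalSpace (A i)] [CompactSpace (∀ i, A i)] {F : Set (∀ i, A i)}
    (hF : IsClopen F) : ∃ (t : Finset ι) (S : Set (∀ i : t, A i)), F = t.restrict ⁻¹' S := by
  have hbox : ∀ x : F, ∃ (I : Finset ι) (u : ∀ i, Set (A i)),
      (∀ i ∈ I, IsOpen (u i) ∧ x.1 i ∈ u i) ∧ (I : Set ι).pi u ⊆ F :=
    fun x => isOpen_pi_iff.mp hF.isOpen x x.2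
  choose I u hu hsub using hbox
  obtain ⟨s, hs⟩ := hF.isClosed.isCompact.elim_finite_subcover (fun x => (I x : Set ι).pi (u x))
    (fun x => isOpen_set_pi (I x).finite_toSet fun i hi => (hu x i hi).1)
    (fun x hx => Set.mem_iUnion.mpr ⟨⟨x, hx⟩, fun i hi => (hu _ i hi).2⟩)
  refine ⟨s.biUnion I, (s.biUnion I).restrict '' F, (Set.subset_preimage_image _ _).antisymm ?_⟩
  rintro y ⟨x, hx, hxy⟩
  obtain ⟨x₀, hx₀, hx⟩ := Set.mem_iUnion₂.mp (hs hx)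
  refine hsub x₀ fun i hi => ?_
  have hxyi : x i = y i := congrFun hxy ⟨i, Finset.mem_biUnion.mpr ⟨x₀, hx₀, hi⟩⟩
  exact hxyi ▸ hx i hi

section Controlled

variable {B C : Type*}

def controlledPerm : ((ℤ → B) → Perm C) →* Perm (ℤ → B × C) where
  toFun κ :=
    { toFun z j := ((z j).1, κ (fun t => (z (t + j)).1) (z j).2)
      invFun z j := ((z j).1, (κ (fun t => (z (t + j)).1)).symm (z j).2)
      left_inv z := by funext j; simp
      right_inv z := by funext j; simp }
  map_one' := rfl
  map_mul' _ _ := rfl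

@[simp]
theorem controlledPerm_apply (κ : (ℤ → B) → Perm C) (z : ℤ → B × C) (j : ℤ) :
    controlledPerm κ z j = ((z j).1, κ (fun t => (z (t + j)).1) (z j).2) :=
  rfl

theorem coe_controlledPerm_mulIndicator (φ : Perm C) (F : Set (ℤ → B)) :
    ⇑(controlledPerm (F.mulIndicator fun _ => φ)) = ctrlSymb φ F := by
  funext z j
  by_cases h : (fun t => (z (t + j)).1) ∈ F <;> simp [ctrlSymb, h]

theorem partialShift₁_zpow_apply (k : ℤ) (z : ℤ → B × C) (j : ℤ) :
    (partialShift₁ B C ^ k) z j = ((z (j + k)).1, (z j).2) := by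
  induction k using Int.induction_on generalizing z j with
  | zero => simp
  | succ k ih =>
    rw [zpow_add_one, Perm.mul_apply, ih]
    simp [partialShift₁, add_assoc]
  | pred k ih =>
    rw [zpow_sub_one, Perm.mul_apply, ih]
    simp [partialShift₁, Perm.inv_def, sub_eq_add_neg, add_assoc]

theorem partialShift₁_zpow_conj_controlledPerm (k : ℤ) (κ : (ℤ → B) → Perm C) :
    partialShift₁ B C ^ (-k) * controlledPerm κ * partialShift₁ B C ^ k =
      controlledPerm fun x => κ fun t => x (t + k) := by
  ext z j <;> simp only [Perm.mul_apply, partialShift₁_zpow_apply, controlledPerm_apply]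
  · simp
  · simp [add_right_comm]

theorem controlledPerm_comp_eval_zero (κ : B → Perm C) :
    controlledPerm (fun x => κ (x 0)) = symbolPerm (prodShear (Equiv.refl B) κ) := by
  ext z j <;> simp [symbolPerm]

end Controlled

section Realizable

variable {B C : Type*}

theorem partialShift₁_mem_PAut : partialShift₁ B C ∈ PAut B C :=
  Subgroup.subset_closure (Or.inl (Set.mem_insert _ _))

theorem symbolPerm_mem_PAut (π : Perm (B × C)) : symbolPerm π ∈ PAut B C :=
  Subgroup.subset_closure (Or.inr ⟨π, rfl⟩)

variable (B C) in
def PAut.controls : Subgroup ((ℤ → B) → Perm C) :=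
  (PAut B C).comap controlledPerm

theorem PAut.comp_eval_mem_controls (κ : B → Perm C) (k : ℤ) :
    (fun x : ℤ → B => κ (x k)) ∈ PAut.controls B C := by
  have h := partialShift₁_zpow_conj_controlledPerm k fun x : ℤ → B => κ (x 0)
  simp only [zero_add] at h
  change controlledPerm _ ∈ PAut B C
  rw [← h, controlledPerm_comp_eval_zero]
  exact mul_mem (mul_mem (zpow_mem partialShift₁_mem_PAut _) (symbolPerm_mem_PAut _))
    (zpow_mem partialShift₁_mem_PAut _)

/-- The permutations `φ` of `C` for which `ctrl(φ, F)` lies in `PAut[B;C]`. -/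
noncomputable def ctrlRealizable (F : Set (ℤ → B)) : Subgroup (Perm C) :=
  (PAut.controls B C).comap ((Set.mulIndicatorHom (Perm C) F).comp (Pi.constMonoidHom _ _))

theorem mem_ctrlRealizable {φ : Perm C} {F : Set (ℤ → B)} :
    φ ∈ ctrlRealizable F ↔ F.mulIndicator (fun _ => φ) ∈ PAut.controls B C :=
  Iff.rfl

theorem ctrlRealizable_preimage_eval (k : ℤ) (S : Set B) :
    ctrlRealizable (C := C) ((fun x : ℤ → B => x k) ⁻¹' S) = ⊤ :=
  eq_top_iff.mpr fun φ _ => PAut.comp_eval_mem_controls (S.mulIndicator fun _ => φ) k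

theorem ctrlRealizable_univ : ctrlRealizable (C := C) (Set.univ : Set (ℤ → B)) = ⊤ :=
  ctrlRealizable_preimage_eval 0 Set.univ

theorem mem_ctrlRealizable_union {φ : Perm C} {F G : Set (ℤ → B)} (hFG : Disjoint F G)
    (hF : φ ∈ ctrlRealizable F) (hG : φ ∈ ctrlRealizable G) : φ ∈ ctrlRealizable (F ∪ G) := by
  rw [mem_ctrlRealizable, Set.mulIndicator_union_of_disjoint hFG]
  exact mul_mem hF hG

theorem mem_ctrlRealizable_biUnion {ι : Type*} {S : Set ι} (hS : S.Finite)
    {G : ι → Set (ℤ → B)} (hG : S.PairwiseDisjoint G) {φ : Perm C}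
    (hφ : ∀ i ∈ S, φ ∈ ctrlRealizable (G i)) : φ ∈ ctrlRealizable (⋃ i ∈ S, G i) := by
  induction S, hS using Set.Finite.induction_on with
  | empty =>
    rw [Set.biUnion_empty, mem_ctrlRealizable, Set.mulIndicator_empty']
    exact one_mem _
  | @insert i S hi _ ih =>
    obtain ⟨hG, hGi⟩ := Set.pairwiseDisjoint_insert.mp hG
    rw [Set.biUnion_insert]
    refine mem_ctrlRealizable_union ?_ (hφ i (Set.mem_insert i S))
      (ih hG fun j hj => hφ j (Set.mem_insert_of_mem i hj))
    exact Set.disjoint_iUnion₂_right.mpr fun j hj => hGi j hj (ne_of_mem_of_not_mem hj hi).symm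

theorem commutatorElement_mem_ctrlRealizable_inter {φ ψ : Perm C} {F G : Set (ℤ → B)}
    (hφ : φ ∈ ctrlRealizable F) (hψ : ψ ∈ ctrlRealizable G) :
    ⁅φ, ψ⁆ ∈ ctrlRealizable (F ∩ G) := by
  have h : (F ∩ G).mulIndicator (fun _ => ⁅φ, ψ⁆) =
      ⁅F.mulIndicator fun _ => φ, G.mulIndicator fun _ => ψ⁆ := by
    funext x
    by_cases hF : x ∈ F <;> by_cases hG : x ∈ G <;> simp [hF, hG, commutatorElement_def]
  rw [mem_ctrlRealizable, h, commutatorElement_def]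
  exact mul_mem (mul_mem (mul_mem hφ hψ) (inv_mem hφ)) (inv_mem hψ)

end Realizable

theorem Equiv.Perm.IsThreeCycle.exists_commutatorElement_inv_eq {α : Type*} [Fintype α]
    [DecidableEq α] {c : Perm α} (hc : c.IsThreeCycle) : ∃ β : Perm α, ⁅c⁻¹, β⁆ = c := by
  obtain ⟨β, hβ⟩ := isConj_iff.mp (isConj_of_cycleType_eq (cycleType_inv c).symm)
  have h3 : c ^ 3 = 1 := hc.orderOf ▸ pow_orderOf_eq_one c
  refine ⟨β, ?_⟩
  calc ⁅c⁻¹, β⁆ = c⁻¹ * (β * c * β⁻¹) := by group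
    _ = c ^ 3 * c⁻¹ * c⁻¹ := by rw [hβ, h3, one_mul]
    _ = c := by group

section Alternating

variable {B C : Type*} [Fintype C] [DecidableEq C]

theorem alternatingGroup_le_ctrlRealizable_inter {F G : Set (ℤ → B)}
    (hF : alternatingGroup C ≤ ctrlRealizable F) (hG : ctrlRealizable (C := C) G = ⊤) :
    alternatingGroup C ≤ ctrlRealizable (F ∩ G) := by
  rw [← closure_three_cycles_eq_alternating, Subgroup.closure_le]
  intro c hc
  obtain ⟨β, hβ⟩ := IsThreeCycle.exists_commutatorElement_inv_eq hc
  rw [← hβ]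
  exact commutatorElement_mem_ctrlRealizable_inter (hF (inv_mem hc.mem_alternatingGroup))
    (hG ▸ Subgroup.mem_top β)

theorem alternatingGroup_le_ctrlRealizable_biInter {ι : Type*} (s : Finset ι)
    {G : ι → Set (ℤ → B)} (hG : ∀ i ∈ s, ctrlRealizable (C := C) (G i) = ⊤) :
    alternatingGroup C ≤ ctrlRealizable (⋂ i ∈ s, G i) := by
  induction s using Finset.induction_on with
  | empty => simp [ctrlRealizable_univ]
  | insert i s _ ih =>
    rw [Finset.set_biInter_insert, Set.inter_comm]
    exact alternatingGroup_le_ctrlRealizable_inter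
      (ih fun j hj => hG j (Finset.mem_insert_of_mem hj)) (hG i (Finset.mem_insert_self i s))

theorem alternatingGroup_le_ctrlRealizable_restrict_preimage_singleton (t : Finset ℤ)
    (u : t → B) : alternatingGroup C ≤ ctrlRealizable (t.restrict ⁻¹' ({u} : Set (t → B))) := by
  have h : t.restrict ⁻¹' ({u} : Set (t → B)) =
      ⋂ i ∈ (Finset.univ : Finset t), (fun x : ℤ → B => x i) ⁻¹' {u i} := by
    ext x
    simp [funext_iff]
  rw [h]
  exact alternatingGroup_le_ctrlRealizable_biInter _ fun i _ => ctrlRealizable_preimage_eval _ _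

end Alternating

theorem stmt7_general (B C : Type) [Fintype B] [Fintype C] [DecidableEq C]
    (φ : Equiv.Perm C) (hφ : φ ∈ alternatingGroup C)
    (F : Set (ℤ → B)) (hF : IsClopen F) :
    ∃ f : Equiv.Perm (ℤ → B × C), f ∈ PAut B C ∧ ⇑f = ctrlSymb φ F := by
  obtain ⟨t, S, rfl⟩ := hF.exists_finset_eq_restrict_preimage
  refine ⟨controlledPerm _, ?_, coe_controlledPerm_mulIndicator φ _⟩
  rw [← Set.biUnion_preimage_singleton]
  exact mem_ctrlRealizable_biUnion S.toFinite (Set.pairwiseDisjoint_fiber _ _) fun u _ =>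
    alternatingGroup_le_ctrlRealizable_restrict_preimage_singleton t u hφ

/-- for `|B| ≥ 2`, `|C| ≥ 2`, every even permutation `φ` of `C` and every clopen
`F ⊆ ℤ → B`, the map `ctrl(φ, F)` underlies an element of `PAut[B;C]`. -/
theorem stmt7 (B C : Type) [Fintype B] [Fintype C] [DecidableEq C]
    (hB : 2 ≤ Fintype.card B) (hC : 2 ≤ Fintype.card C)
    (φ : Equiv.Perm C) (hφ : φ ∈ alternatingGroup C)
    (F : Set (ℤ → B)) (hF : IsClopen F) :
    ∃ f : Equiv.Perm (ℤ → B × C), f ∈ PAut B C ∧ ⇑f = ctrlSymb φ F :=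
  stmt7_general B C φ hφ F hF
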